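/- Let β ∈ (0,π), let P ⊆ ℝ² be a set of points, and let p ∈ P. Then p lies on the topological frontier (boundary) of the β-hull O_βH(P) if and only if at least one of the four open β-quadrants with apex p (namely p + C_TR(β), p + C_TL(β), p + C_BL(β), p + C_BR(β)) is P-free. (Note that every point of P belongs to O_βH(P), since no P-free quadrant can contain a point of P.) -/
import Mathlib

open Real Set MeasureTheory Pointwise Topology Filter

/-- The open top-right cone for angle `β`. -/
def CTR (β : ℝ) : Set (ℝ × ℝ) :=
  {p | ∃ s t : ℝ, 0 < s ∧ 0 < t ∧ p = s • ((1 : ℝ), (0 : ℝ)) + t • (Real.cos β, Real.sin β)}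

/-- The open top-left cone for angle `β`. -/
def CTL (β : ℝ) : Set (ℝ × ℝ) :=
  {p | ∃ s t : ℝ, 0 < s ∧ 0 < t ∧ p = s • ((-1 : ℝ), (0 : ℝ)) + t • (Real.cos β, Real.sin β)}

/-- The open bottom-left cone: the reflection of the top-right cone. -/
def CBL (β : ℝ) : Set (ℝ × ℝ) := {p | -p ∈ CTR β}

/-- The open bottom-right cone: the reflection of the top-left cone. -/
def CBR (β : ℝ) : Set (ℝ × ℝ) := {p | -p ∈ CTL β}

/-- The quad `a + C` of a set `C` by a point `a`. -/
def quad (a : ℝ × ℝ) (C : Set (ℝ × ℝ)) : Set (ℝ × ℝ) := {x | x - a ∈ C}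

/-- A region `Q` is `P`-free if it contains no point of `P`. -/
def PFree (P Q : Set (ℝ × ℝ)) : Prop := P ∩ Q = ∅

/-- `C` is one of the four β-cones. -/
def IsBetaCone (β : ℝ) (C : Set (ℝ × ℝ)) : Prop :=
  C = CTR β ∨ C = CTL β ∨ C = CBL β ∨ C = CBR β

/-- The β-hull of `P`: the plane minus the union of all `P`-free β-quadrants. -/
def betaHull (β : ℝ) (P : Set (ℝ × ℝ)) : Set (ℝ × ℝ) :=
  {x | ∀ (a : ℝ × ℝ) (C : Set (ℝ × ℝ)), IsBetaCone β C → PFree P (quad a C) →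
    x ∉ quad a C}

lemma pfree_iff {P Q : Set (ℝ × ℝ)} : PFree P Q ↔ ∀ q ∈ P, q ∉ Q := by
  simp [PFree, Set.eq_empty_iff_forall_notMem]

lemma mem_CTR_iff {β : ℝ} (hs : 0 < Real.sin β) {p : ℝ × ℝ} :
    p ∈ CTR β ↔ 0 < p.2 ∧ p.2 * Real.cos β < p.1 * Real.sin β := by
  constructor
  · rintro ⟨s, t, hs', ht, rfl⟩
    constructor
    · simp; positivity
    · simp; nlinarith [mul_pos hs' hs]
  · rintro ⟨h1, h2⟩
    refine ⟨p.1 - p.2 / Real.sin β * Real.cos β, p.2 / Real.sin β, ?_, by positivity, ?_⟩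
    · rw [sub_pos, div_mul_eq_mul_div, div_lt_iff₀ hs]; linarith
    · apply Prod.ext <;> simp <;> field_simp

lemma mem_CTL_iff {β : ℝ} (hs : 0 < Real.sin β) {p : ℝ × ℝ} :
    p ∈ CTL β ↔ 0 < p.2 ∧ p.1 * Real.sin β < p.2 * Real.cos β := by
  constructor
  · rintro ⟨s, t, hs', ht, rfl⟩
    constructor
    · simp; positivity
    · simp; nlinarith [mul_pos hs' hs]
  · rintro ⟨h1, h2⟩
    refine ⟨p.2 / Real.sin β * Real.cos β - p.1, p.2 / Real.sin β, ?_, by positivity, ?_⟩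
    · rw [sub_pos, div_mul_eq_mul_div, lt_div_iff₀ hs]; linarith
    · apply Prod.ext <;> simp <;> field_simp <;> ring

section Cone
variable {β : ℝ} (hs : 0 < Real.sin β)

include hs

lemma isOpen_CTR : IsOpen (CTR β) := by
  have : CTR β = {p : ℝ × ℝ | 0 < p.2} ∩ {p : ℝ × ℝ | p.2 * Real.cos β < p.1 * Real.sin β} := by
    ext p; simp [mem_CTR_iff hs]
  rw [this]
  exact (isOpen_lt continuous_const continuous_snd).inter
    (isOpen_lt (continuous_snd.mul continuous_const) (continuous_fst.mul continuous_const))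

lemma isOpen_CTL : IsOpen (CTL β) := by
  have : CTL β = {p : ℝ × ℝ | 0 < p.2} ∩ {p : ℝ × ℝ | p.1 * Real.sin β < p.2 * Real.cos β} := by
    ext p; simp [mem_CTL_iff hs]
  rw [this]
  exact (isOpen_lt continuous_const continuous_snd).inter
    (isOpen_lt (continuous_fst.mul continuous_const) (continuous_snd.mul continuous_const))

lemma add_mem_CTR {u v : ℝ × ℝ} (hu : u ∈ CTR β) (hv : v ∈ CTR β) : u + v ∈ CTR β := by
  rw [mem_CTR_iff hs] at *
  obtain ⟨h1, h2⟩ := hu; obtain ⟨h3, h4⟩ := hv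
  exact ⟨by simpa using add_pos h1 h3, by simp [add_mul]; linarith⟩

lemma add_mem_CTL {u v : ℝ × ℝ} (hu : u ∈ CTL β) (hv : v ∈ CTL β) : u + v ∈ CTL β := by
  rw [mem_CTL_iff hs] at *
  obtain ⟨h1, h2⟩ := hu; obtain ⟨h3, h4⟩ := hv
  exact ⟨by simpa using add_pos h1 h3, by simp [add_mul]; linarith⟩

lemma smul_mem_CTR {c : ℝ} (hc : 0 < c) {u : ℝ × ℝ} (hu : u ∈ CTR β) : c • u ∈ CTR β := by
  rw [mem_CTR_iff hs] at *
  obtain ⟨h1, h2⟩ := hu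
  refine ⟨by simpa using mul_pos hc h1, ?_⟩
  simp only [Prod.smul_fst, Prod.smul_snd, smul_eq_mul, mul_assoc]
  exact mul_lt_mul_of_pos_left h2 hc

lemma smul_mem_CTL {c : ℝ} (hc : 0 < c) {u : ℝ × ℝ} (hu : u ∈ CTL β) : c • u ∈ CTL β := by
  rw [mem_CTL_iff hs] at *
  obtain ⟨h1, h2⟩ := hu
  refine ⟨by simpa using mul_pos hc h1, ?_⟩
  simp only [Prod.smul_fst, Prod.smul_snd, smul_eq_mul, mul_assoc]
  exact mul_lt_mul_of_pos_left h2 hc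

/-- Properties packaged for any β-cone. -/
lemma cone_props {C : Set (ℝ × ℝ)} (hC : IsBetaCone β C) :
    IsOpen C ∧ (∀ u ∈ C, ∀ v ∈ C, u + v ∈ C) ∧
    (∀ c : ℝ, 0 < c → ∀ u ∈ C, c • u ∈ C) ∧ C.Nonempty := by
  have wTR : ((1 : ℝ) + Real.cos β, Real.sin β) ∈ CTR β :=
    ⟨1, 1, one_pos, one_pos, by simp⟩
  have wTL : (-(1 : ℝ) + Real.cos β, Real.sin β) ∈ CTL β :=
    ⟨1, 1, one_pos, one_pos, by simp⟩
  rcases hC with rfl | rfl | rfl | rfl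
  · exact ⟨isOpen_CTR hs, fun u hu v hv => add_mem_CTR hs hu hv,
      fun c hc u hu => smul_mem_CTR hs hc hu, ⟨_, wTR⟩⟩
  · exact ⟨isOpen_CTL hs, fun u hu v hv => add_mem_CTL hs hu hv,
      fun c hc u hu => smul_mem_CTL hs hc hu, ⟨_, wTL⟩⟩
  · refine ⟨?_, fun u hu v hv => ?_, fun c hc u hu => ?_, ⟨-((1 : ℝ) + Real.cos β, Real.sin β), ?_⟩⟩
    · exact (isOpen_CTR hs).preimage continuous_neg
    · show -(u + v) ∈ CTR β; rw [neg_add]; exact add_mem_CTR hs hu hv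
    · show -(c • u) ∈ CTR β; rw [← smul_neg]; exact smul_mem_CTR hs hc hu
    · show - -((1 : ℝ) + Real.cos β, Real.sin β) ∈ CTR β; rw [neg_neg]; exact wTR
  · refine ⟨?_, fun u hu v hv => ?_, fun c hc u hu => ?_, ⟨-(-(1 : ℝ) + Real.cos β, Real.sin β), ?_⟩⟩
    · exact (isOpen_CTL hs).preimage continuous_neg
    · show -(u + v) ∈ CTL β; rw [neg_add]; exact add_mem_CTL hs hu hv
    · show -(c • u) ∈ CTL β; rw [← smul_neg]; exact smul_mem_CTL hs hc hu
    · show - -(-(1 : ℝ) + Real.cos β, Real.sin β) ∈ CTL β; rw [neg_neg]; exact wTL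

end Cone

/-- If `x` lies in the quadrant `a + C`, then `x + C ⊆ a + C`. -/
lemma quad_subset {C : Set (ℝ × ℝ)} (hadd : ∀ u ∈ C, ∀ v ∈ C, u + v ∈ C)
    {a x : ℝ × ℝ} (hx : x ∈ quad a C) : quad x C ⊆ quad a C := by
  intro y hy
  have : (y - x) + (x - a) ∈ C := hadd _ hy _ hx
  simpa [quad, sub_add_sub_cancel] using this

lemma mem_closure_quad {C : Set (ℝ × ℝ)} (hne : C.Nonempty)
    (hsmul : ∀ c : ℝ, 0 < c → ∀ u ∈ C, c • u ∈ C) (p : ℝ × ℝ) :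
    p ∈ closure (quad p C) := by
  obtain ⟨w, hw⟩ := hne
  have h0 : Filter.Tendsto (fun n : ℕ => 1 / ((n : ℝ) + 1)) Filter.atTop (𝓝 0) :=
    tendsto_one_div_add_atTop_nhds_zero_nat
  have htend : Filter.Tendsto (fun n : ℕ => p + (1 / ((n : ℝ) + 1)) • w)
      Filter.atTop (𝓝 p) := by
    have := (tendsto_const_nhds (α := ℕ) (x := p)).add (h0.smul_const w)
    simpa using this
  refine mem_closure_of_tendsto htend ?_
  filter_upwards with n
  show (p + (1 / ((n : ℝ) + 1)) • w) - p ∈ C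
  have : (0 : ℝ) < 1 / ((n : ℝ) + 1) := by positivity
  simpa using hsmul _ this w hw

theorem frontier_betaHull_iff (β : ℝ) (hβ : β ∈ Set.Ioo 0 Real.pi)
    (P : Set (ℝ × ℝ)) (p : ℝ × ℝ) (hp : p ∈ P) :
    p ∈ frontier (betaHull β P) ↔
      PFree P (quad p (CTR β)) ∨ PFree P (quad p (CTL β)) ∨
      PFree P (quad p (CBL β)) ∨ PFree P (quad p (CBR β)) := by
  have hs : 0 < Real.sin β := Real.sin_pos_of_pos_of_lt_pi hβ.1 hβ.2
  have hphull : p ∈ betaHull β P := by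
    intro a C _ hfree hmem
    exact (pfree_iff.mp hfree) p hp hmem
  rw [frontier_eq_closure_inter_closure, Set.mem_inter_iff]
  have h1 : p ∈ closure (betaHull β P) := subset_closure hphull
  simp only [h1, true_and]
  constructor
  · -- p ∈ closure (hullᶜ) → some quadrant at p is free
    intro hcl
    by_contra hcon
    push_neg at hcon
    obtain ⟨hTR, hTL, hBL, hBR⟩ := hcon
    -- S: points all of whose four quadrants meet P
    set S : Set (ℝ × ℝ) :=
      {x | ¬ PFree P (quad x (CTR β))} ∩ {x | ¬ PFree P (quad x (CTL β))} ∩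
      {x | ¬ PFree P (quad x (CBL β))} ∩ {x | ¬ PFree P (quad x (CBR β))} with hS
    have hopen : ∀ C : Set (ℝ × ℝ), IsBetaCone β C → IsOpen {x | ¬ PFree P (quad x C)} := by
      intro C hC
      obtain ⟨hCo, _, _, _⟩ := cone_props hs hC
      have : {x | ¬ PFree P (quad x C)} = ⋃ q ∈ P, (fun x => q - x) ⁻¹' C := by
        ext x
        simp only [Set.mem_setOf_eq, pfree_iff, not_forall, Set.mem_iUnion, Set.mem_preimage]
        constructor
        · rintro ⟨q, hq, hq2⟩
          exact ⟨q, hq, by simpa [quad] using hq2⟩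
        · rintro ⟨q, hq, hq2⟩
          exact ⟨q, hq, by simpa [quad] using hq2⟩
      rw [this]
      exact isOpen_biUnion fun q _ =>
        hCo.preimage (continuous_const.sub continuous_id)
    have hSopen : IsOpen S :=
      ((((hopen _ (Or.inl rfl)).inter (hopen _ (Or.inr (Or.inl rfl)))).inter
        (hopen _ (Or.inr (Or.inr (Or.inl rfl))))).inter
        (hopen _ (Or.inr (Or.inr (Or.inr rfl)))))
    have hpS : p ∈ S := ⟨⟨⟨hTR, hTL⟩, hBL⟩, hBR⟩
    have hSsub : S ⊆ betaHull β P := by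
      rintro x ⟨⟨⟨xTR, xTL⟩, xBL⟩, xBR⟩ a C hC hfree hmem
      obtain ⟨_, hadd, _, _⟩ := cone_props hs hC
      have hsub : quad x C ⊆ quad a C := quad_subset hadd hmem
      have hxC : ¬ PFree P (quad x C) := by
        rcases hC with rfl | rfl | rfl | rfl <;> assumption
      rw [pfree_iff] at hxC
      push_neg at hxC
      obtain ⟨q, hq, hq2⟩ := hxC
      exact (pfree_iff.mp hfree) q hq (hsub hq2)
    have : p ∈ interior (betaHull β P) :=
      interior_maximal hSsub hSopen hpS
    rw [closure_compl] at hcl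
    exact hcl this
  · -- some quadrant at p is free → p ∈ closure (hullᶜ)
    intro h
    have key : ∀ C : Set (ℝ × ℝ), IsBetaCone β C → PFree P (quad p C) →
        p ∈ closure (betaHull β P)ᶜ := by
      intro C hC hfree
      obtain ⟨_, _, hsmul, hne⟩ := cone_props hs hC
      have hsub : quad p C ⊆ (betaHull β P)ᶜ := by
        intro x hx hxhull
        exact hxhull p C hC hfree hx
      exact closure_mono hsub (mem_closure_quad hne hsmul p)
    rcases h with h | h | h | h
    · exact key _ (Or.inl rfl) h
    · exact key _ (Or.inr (Or.inl rfl)) h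
    · exact key _ (Or.inr (Or.inr (Or.inl rfl))) h
    · exact key _ (Or.inr (Or.inr (Or.inr rfl))) h
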